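/- arXiv:2302.07818 — 3 statements merged into one kernel-verified Lean document; each statement's English description precedes it below -/
import Mathlib

section
/- Let A and B be positive definite n×n complex matrices and let P be the orthogonal projection onto the range of (B − A)_+. Then for every λ > 0, tr(P A ((A + λI)^{-1} − (B + λI)^{-1})) ≥ 0. -/
/-!
Write `Δ = B - A = Δ⁺ - Δ⁻`, `A_λ = A + λ`, `B_λ = B + λ` and `C = A_λ + Δ⁺ = B_λ + Δ⁻`, so
that `C` dominates both `A_λ` and `B_λ`. Since `P` projects onto the range of `Δ⁺` and
`Δ⁻ Δ⁺ = 0`, we get `P Δ = Δ⁺`, and a direct computation gives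
`P A (A_λ⁻¹ - B_λ⁻¹) = (Δ⁺ + λ P) (B_λ⁻¹ - C⁻¹) + (A + λ (1 - P)) (A_λ⁻¹ - C⁻¹)`.
By operator antitonicity of the inverse both terms are products of two positive semidefinite
matrices, hence have nonnegative trace.
-/

open Matrix
open scoped ComplexOrder

/-- The matrix absolute value `|X| = (X*X)^{1/2}`, via the continuous functional calculus. -/
noncomputable def mAbs {m : ℕ} (X : Matrix (Fin m) (Fin m) ℂ) : Matrix (Fin m) (Fin m) ℂ :=
  cfc (fun x : ℝ => |x|) X

/-- The positive part `X₊ = (|X| + X)/2` of a Hermitian matrix. -/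
noncomputable def mPosPart {m : ℕ} (X : Matrix (Fin m) (Fin m) ℂ) : Matrix (Fin m) (Fin m) ℂ :=
  (2 : ℝ)⁻¹ • (mAbs X + X)

open scoped MatrixOrder

theorem mul_mul_sub_eq_of_mul_eq_one {R : Type*} [Ring R] {a b d p t a' b' c' : R}
    (ha : (a + t) * a' = 1) (hb : (b + t) * b' = 1) (hc : (a + t + d) * c' = 1)
    (hd : p * (b - a) = d) :
    p * a * (a' - b') = (d + p * t) * (b' - c') + (a + (1 - p) * t) * (a' - c') := by
  rw [← sub_eq_zero]
  calc _ = (p - 1) * ((a + t) * a' - 1) - p * ((b + t) * b' - 1) - (d - p * (b - a)) * b'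
        + ((a + t + d) * c' - 1) := by noncomm_ring
    _ = 0 := by simp [ha, hb, hc, hd]

namespace Matrix

variable {ι 𝕜 : Type*} [Fintype ι] [DecidableEq ι] [RCLike 𝕜]

lemma exists_mul_eq_of_range_le {m n p K : Type*} [Fintype n] [DecidableEq n] [Fintype p]
    [CommSemiring K] {M : Matrix m n K} {N : Matrix m p K}
    (h : LinearMap.range M.mulVecLin ≤ LinearMap.range N.mulVecLin) :
    ∃ X : Matrix p n K, M = N * X := by
  have hcol : ∀ j, ∃ x, N *ᵥ x = M *ᵥ Pi.single j 1 := fun j => h ⟨_, rfl⟩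
  choose x hx using hcol
  refine ⟨(of x)ᵀ, ?_⟩
  ext i j
  have hxji := congrFun (hx j) i
  rw [mulVec_single_one] at hxji
  simpa [mulVec, dotProduct, mul_apply] using hxji.symm

lemma trace_mul_nonneg {M N : Matrix ι ι 𝕜} (hM : 0 ≤ M) (hN : 0 ≤ N) :
    0 ≤ (M * N).trace := by
  obtain ⟨X, rfl⟩ := CStarAlgebra.nonneg_iff_eq_star_mul_self.mp hM
  rw [mul_assoc, trace_mul_comm, star_eq_conjTranspose]
  exact (hN.posSemidef.mul_mul_conjTranspose_same X).trace_nonneg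

open scoped Matrix.Norms.L2Operator in
lemma PosDef.inv_le_inv_of_le {X Y : Matrix ι ι ℂ} (hX : X.PosDef) (h : X ≤ Y) :
    Y⁻¹ ≤ X⁻¹ := by
  rw [nonsing_inv_eq_ringInverse, nonsing_inv_eq_ringInverse]
  exact CStarAlgebra.ringInverse_le_ringInverse h hX.isStrictlyPositive

lemma mul_eq_posPart_of_range_eq {P X : Matrix ι ι 𝕜} (hP : IsStarProjection P)
    (hX : IsSelfAdjoint X)
    (hrange : LinearMap.range P.mulVecLin = LinearMap.range (X⁺).mulVecLin) :
    P * X = X⁺ := by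
  obtain ⟨Y, hY⟩ := exists_mul_eq_of_range_le hrange.ge
  obtain ⟨Z, hZ⟩ := exists_mul_eq_of_range_le hrange.le
  have hpos : P * X⁺ = X⁺ := by rw [hY, ← mul_assoc, hP.isIdempotentElem.eq]
  have hneg : X⁻ * P = 0 := by rw [hZ, ← mul_assoc, CFC.negPart_mul_posPart, zero_mul]
  have hneg' : P * X⁻ = 0 := by
    simpa [star_mul, hP.isSelfAdjoint.star_eq, (CFC.negPart_nonneg X).isSelfAdjoint.star_eq]
      using congrArg star hneg
  calc P * X = P * (X⁺ - X⁻) := by rw [CFC.posPart_sub_negPart X hX]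
    _ = X⁺ := by rw [mul_sub, hpos, hneg', sub_zero]

end Matrix

lemma mPosPart_eq_posPart {m : ℕ} {X : Matrix (Fin m) (Fin m) ℂ} (hX : IsSelfAdjoint X) :
    mPosPart X = X⁺ := by
  have h : (fun x : ℝ => x⁺) = fun x => (2 : ℝ)⁻¹ * (|x| + id x) := by
    ext x
    rw [id, abs_add_eq_two_nsmul_posPart, two_nsmul]
    ring
  rw [CFC.posPart_def, cfcₙ_eq_cfc, h, cfc_const_mul _ _ X, cfc_add X (|·|) id, cfc_id ℝ X,
    mPosPart, mAbs]

theorem stmt_2 {n : ℕ} (A B P : Matrix (Fin n) (Fin n) ℂ)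
    (hA : A.PosDef) (hB : B.PosDef)
    (hP₁ : P.IsHermitian) (hP₂ : P * P = P)
    (hP₃ : LinearMap.range P.mulVecLin = LinearMap.range (mPosPart (B - A)).mulVecLin) :
    ∀ l : ℝ, 0 < l →
      0 ≤ (P * A * ((A + l • (1 : Matrix (Fin n) (Fin n) ℂ))⁻¹
            - (B + l • (1 : Matrix (Fin n) (Fin n) ℂ))⁻¹)).trace := by
  intro l hl
  set L : Matrix (Fin n) (Fin n) ℂ := l • 1
  have hP : IsStarProjection P := ⟨hP₂, hP₁.isSelfAdjoint⟩
  have hΔ : IsSelfAdjoint (B - A) := (hB.isHermitian.sub hA.isHermitian).isSelfAdjoint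
  rw [mPosPart_eq_posPart hΔ] at hP₃
  have hL : 0 ≤ L := smul_nonneg hl.le zero_le_one
  have hAL : (A + L).PosDef := hA.add_posSemidef hL.posSemidef
  have hBL : (B + L).PosDef := hB.add_posSemidef hL.posSemidef
  have hCL : (A + L + (B - A)⁺).PosDef := hAL.add_posSemidef (CFC.posPart_nonneg _).posSemidef
  have hAC : A + L ≤ A + L + (B - A)⁺ := le_add_of_nonneg_right (CFC.posPart_nonneg _)
  have hBC : B + L ≤ A + L + (B - A)⁺ := by
    have hC : A + L + (B - A)⁺ = B + L + (B - A)⁻ := by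
      have := sub_eq_sub_iff_add_eq_add.mp (CFC.posPart_sub_negPart (B - A) hΔ)
      rw [add_right_comm, add_comm A, this, add_right_comm]
    exact hC ▸ le_add_of_nonneg_right (CFC.negPart_nonneg _)
  rw [mul_mul_sub_eq_of_mul_eq_one (mul_nonsing_inv _ hAL.det_pos.ne'.isUnit)
    (mul_nonsing_inv _ hBL.det_pos.ne'.isUnit) (mul_nonsing_inv _ hCL.det_pos.ne'.isUnit)
    (mul_eq_posPart_of_range_eq hP hΔ hP₃), trace_add]
  refine add_nonneg (trace_mul_nonneg ?_ (sub_nonneg.2 (hBL.inv_le_inv_of_le hBC)))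
    (trace_mul_nonneg ?_ (sub_nonneg.2 (hAL.inv_le_inv_of_le hAC)))
  · exact add_nonneg (CFC.posPart_nonneg _) (by simpa [L] using smul_nonneg hl.le hP.nonneg)
  · exact add_nonneg hA.posSemidef.nonneg
      (by simpa [L] using smul_nonneg hl.le hP.one_sub_nonneg)
end

section
/- Let A and B be positive definite n×n complex matrices and let P be the orthogonal projection onto the range of (B − A)_+. Then tr(P A (B − A)) ≥ 0. -/
/-!
The negative part `X₊ - X` of `X = B - A` annihilates the range of `X₊`, which is the range of the
orthogonal projection `P`; hence `X P = X₊`, and `tr (P A X) = tr (X P A) = tr (X₊ A)` is the trace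
of a product of two positive semidefinite matrices.
-/

open Matrix
open scoped ComplexOrder

namespace Matrix

open scoped MatrixOrder in
theorem PosSemidef.trace_mul_nonneg {𝕜 n : Type*} [RCLike 𝕜] [Fintype n] {A B : Matrix n n 𝕜}
    (hA : A.PosSemidef) (hB : B.PosSemidef) : 0 ≤ (A * B).trace := by
  classical
  obtain ⟨C, rfl⟩ := CStarAlgebra.nonneg_iff_eq_star_mul_self.mp hB.nonneg
  rw [← mul_assoc, trace_mul_comm, ← mul_assoc, star_eq_conjTranspose]
  exact (hA.mul_mul_conjTranspose_same C).trace_nonneg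

theorem mul_eq_zero_of_range_le {R l m n n' : Type*} [CommRing R] [Fintype m] [Fintype n]
    [Fintype n'] {K : Matrix l m R} {M : Matrix m n R} {N : Matrix m n' R}
    (hNM : LinearMap.range N.mulVecLin ≤ LinearMap.range M.mulVecLin) (hKM : K * M = 0) :
    K * N = 0 := by
  classical
  have hKN : (K * N).mulVecLin = 0 := by
    rw [mulVecLin_mul, ← LinearMap.range_le_ker_iff]
    refine hNM.trans (LinearMap.range_le_ker_iff.mpr ?_)
    rw [← mulVecLin_mul, hKM, mulVecLin_zero]
  exact toLin'.injective (by rw [toLin'_apply', hKN, map_zero])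

end Matrix

theorem mPosPart_eq_cfc {m : ℕ} {X : Matrix (Fin m) (Fin m) ℂ} (hX : X.IsHermitian) :
    mPosPart X = cfc (fun x : ℝ => (2 : ℝ)⁻¹ * (|x| + x)) X := by
  simp_rw [← smul_eq_mul]
  rw [mPosPart, mAbs, cfc_smul .., cfc_add .., cfc_id' ℝ X hX.isSelfAdjoint]

open scoped MatrixOrder in
theorem mPosPart_posSemidef {m : ℕ} {X : Matrix (Fin m) (Fin m) ℂ} (hX : X.IsHermitian) :
    (mPosPart X).PosSemidef := by
  rw [mPosPart_eq_cfc hX, ← nonneg_iff_posSemidef]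
  exact cfc_nonneg fun x _ => by nlinarith [neg_abs_le x]

theorem mul_mPosPart {m : ℕ} {X : Matrix (Fin m) (Fin m) ℂ} (hX : X.IsHermitian) :
    X * mPosPart X = mPosPart X * mPosPart X := by
  rw [mPosPart_eq_cfc hX]
  nth_rewrite 1 [← cfc_id' ℝ X hX.isSelfAdjoint]
  rw [← cfc_mul .., ← cfc_mul ..]
  refine cfc_congr fun x _ => ?_
  rcases abs_cases x with ⟨h, _⟩ | ⟨h, _⟩ <;> simp only [h] <;> ring

theorem mul_eq_mPosPart_of_range_eq {m : ℕ} {X P : Matrix (Fin m) (Fin m) ℂ}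
    (hX : X.IsHermitian) (hP : P.IsHermitian) (hPP : P * P = P)
    (hrange : LinearMap.range P.mulVecLin = LinearMap.range (mPosPart X).mulVecLin) :
    X * P = mPosPart X := by
  set Q := mPosPart X
  have hQ : Qᴴ = Q := (mPosPart_posSemidef hX).isHermitian.eq
  have hPQ : P * Q = Q := by
    have h : (1 - P) * Q = 0 :=
      mul_eq_zero_of_range_le hrange.ge (by rw [sub_mul, one_mul, hPP, sub_self])
    rwa [sub_mul, one_mul, sub_eq_zero, eq_comm] at h
  have hQP : Q * P = Q := by
    simpa only [conjTranspose_mul, hQ, hP.eq] using congrArg conjTranspose hPQ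
  have hXP : (X - Q) * P = 0 :=
    mul_eq_zero_of_range_le hrange.le (by rw [sub_mul, mul_mPosPart hX, sub_self])
  rwa [sub_mul, sub_eq_zero, hQP] at hXP

theorem stmt_5 {n : ℕ} (A B P : Matrix (Fin n) (Fin n) ℂ)
    (hA : A.PosDef) (hB : B.PosDef)
    (hP₁ : P.IsHermitian) (hP₂ : P * P = P)
    (hP₃ : LinearMap.range P.mulVecLin = LinearMap.range (mPosPart (B - A)).mulVecLin) :
    0 ≤ (P * A * (B - A)).trace := by
  have hX : (B - A).IsHermitian := hB.isHermitian.sub hA.isHermitian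
  rw [trace_mul_cycle, mul_eq_mPosPart_of_range_eq hX hP₁ hP₂ hP₃]
  exact (mPosPart_posSemidef hX).trace_mul_nonneg hA.posSemidef
end

section
/- For positive definite operators A and B, if AB + BA ≥ 0 then A + B − |A − B| ≥ 0, i.e., |A − B| ≤ A + B. -/
open Matrix
open scoped ComplexOrder

/-!
`(A + B)² - (A - B)² = 2 (AB + BA) ≥ 0`, so `|A - B|² = (A - B)² ≤ (A + B)²`, and both
`|A - B|` and `A + B` are positive. Operator monotonicity of the square root then gives
`|A - B| ≤ A + B`.
-/

section CStarAlgebra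

variable {A : Type*} [CStarAlgebra A] [PartialOrder A] [StarOrderedRing A]

theorem CFC.le_of_mul_self_le_mul_self {a b : A} (ha : 0 ≤ a) (hb : 0 ≤ b)
    (h : a * a ≤ b * b) : a ≤ b := by
  simpa only [CFC.sqrt_mul_self a, CFC.sqrt_mul_self b] using CFC.sqrt_le_sqrt _ _ h

end CStarAlgebra

open scoped MatrixOrder Matrix.Norms.L2Operator

section MatrixAbs

variable {n : ℕ}

theorem mAbs_nonneg (X : Matrix (Fin n) (Fin n) ℂ) : 0 ≤ mAbs X :=
  cfc_nonneg fun x _ => abs_nonneg x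

theorem mAbs_mul_self {X : Matrix (Fin n) (Fin n) ℂ} (hX : X.IsHermitian) :
    mAbs X * mAbs X = X * X := by
  have hX' : IsSelfAdjoint X := hX
  rw [mAbs, ← cfc_mul ..]
  simp only [abs_mul_abs_self]
  rw [cfc_mul .., cfc_id' ℝ X]

theorem mAbs_le_of_mul_self_le {X T : Matrix (Fin n) (Fin n) ℂ} (hX : X.IsHermitian)
    (hT : T.PosSemidef) (h : X * X ≤ T * T) : mAbs X ≤ T :=
  CFC.le_of_mul_self_le_mul_self (mAbs_nonneg X) hT.nonneg (mAbs_mul_self hX ▸ h)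

end MatrixAbs

theorem stmt_17 {n : ℕ} (A B : Matrix (Fin n) (Fin n) ℂ)
    (hA : A.PosDef) (hB : B.PosDef) (hAB : (A * B + B * A).PosSemidef) :
    (A + B - mAbs (A - B)).PosSemidef := by
  have hsq : (A - B) * (A - B) ≤ (A + B) * (A + B) := by
    rw [le_iff, show (A + B) * (A + B) - (A - B) * (A - B)
      = (A * B + B * A) + (A * B + B * A) by noncomm_ring]
    exact hAB.add hAB
  exact le_iff.mp <|
    mAbs_le_of_mul_self_le (hA.1.sub hB.1) (hA.posSemidef.add hB.posSemidef) hsq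
end
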